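/- Let F = (U, C) be an instance of k-SAT (every clause contains exactly k distinct variables). If each variable occurs (in positive or negated form) in at most 2^k/(e·k) clauses, then F is satisfiable. -/

import Mathlib

/-!
Symmetric Lovász Local Lemma, in counting form over the uniformly random assignment. Each clause
is violated by a `2⁻ᵏ` fraction of the assignments, independently of the clauses sharing no
variable with it, and by the occurrence bound it shares a variable with at most `2ᵏ / e` clauses,
itself included. The local lemma is proved by the usual induction: given that the events of `S`
are avoided, event `i` has conditional probability at most `e p`. The events of `S` independent of
`i` leave its probability `p` unchanged, while, by induction and the chain rule, conditioning on
avoiding its `d` neighbours in `S` costs at most a factor `(1 - e p)ᵈ`, which is `≥ 1 / e` because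
`e p (d + 1) ≤ 1`.
-/

open Finset
open scoped Classical BigOperators

section Counting

variable {V α : Type*} [Fintype V] [DecidableEq V] [Fintype α] [DecidableEq α]

lemma card_filter_eq_off (s : Finset V) (b : V → α) :
    #(univ.filter fun a : V → α => ∀ v ∉ s, a v = b v) = Fintype.card α ^ #s := by
  have : (univ.filter fun a : V → α => ∀ v ∉ s, a v = b v)
      = Fintype.piFinset fun v => if v ∈ s then univ else {b v} := by
    ext a
    simp only [mem_filter, mem_univ, true_and, Fintype.mem_piFinset]
    refine forall_congr' fun v => ?_
    split_ifs with hv <;> simp [hv]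
  rw [this, Fintype.card_piFinset]
  simp [apply_ite card, prod_ite_mem]

lemma card_eq_card_pow_mul_card_filter {G : Finset (V → α)} (s : Finset V) (β : V → α)
    (hG : ∀ a a', (∀ v ∉ s, a v = a' v) → a ∈ G → a' ∈ G) :
    #G = Fintype.card α ^ #s * #(G.filter fun a => ∀ v ∈ s, a v = β v) := by
  have hmaps : ∀ a ∈ G, s.piecewise β a ∈ G.filter fun a => ∀ v ∈ s, a v = β v := by
    intro a ha
    refine mem_filter.2 ⟨hG a _ (fun v hv => ?_) ha, fun v hv => ?_⟩ <;> simp [hv]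
  rw [card_eq_sum_card_fiberwise hmaps, sum_const_nat fun b hb => ?_, mul_comm]
  obtain ⟨hbG, hbβ⟩ := mem_filter.1 hb
  rw [← card_filter_eq_off s b]
  congr 1
  ext a
  simp only [mem_filter, mem_univ, true_and]
  constructor
  · rintro ⟨-, rfl⟩ v hv
    simp [hv]
  · intro hab
    refine ⟨hG b a (fun v hv => (hab v hv).symm) hbG, funext fun v => ?_⟩
    by_cases hv : v ∈ s <;> simp [hv, hbβ, hab]

end Counting

lemma one_le_exp_one_mul_one_sub_pow {x : ℝ} {r : ℕ} (h : x * (r + 1) ≤ 1) :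
    1 ≤ Real.exp 1 * (1 - x) ^ r := by
  rcases Nat.eq_zero_or_pos r with rfl | hr
  · simp [Real.one_le_exp zero_le_one]
  have hr' : (0 : ℝ) < r := by exact_mod_cast hr
  have hx : 0 ≤ 1 - x := by nlinarith
  have hbase : 1 ≤ (1 + (r : ℝ)⁻¹) * (1 - x) := by
    rw [show (1 + (r : ℝ)⁻¹) * (1 - x) = (r + 1 - x * (r + 1)) / r by field_simp,
      le_div_iff₀ hr']
    linarith
  calc 1 ≤ ((1 + (r : ℝ)⁻¹) * (1 - x)) ^ r := one_le_pow₀ hbase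
    _ = (1 + (r : ℝ)⁻¹) ^ r * (1 - x) ^ r := mul_pow _ _ _
    _ ≤ Real.exp 1 * (1 - x) ^ r :=
      mul_le_mul_of_nonneg_right Real.one_add_inv_pow_le_exp (pow_nonneg hx r)

section LocalLemma

variable {Ω ι : Type*} [Fintype Ω] (bad : ι → Finset Ω)

noncomputable def avoiding (S : Finset ι) : Finset Ω :=
  univ.filter fun ω => ∀ i ∈ S, ω ∉ bad i

variable {bad}

lemma mem_avoiding {S : Finset ι} {ω : Ω} : ω ∈ avoiding bad S ↔ ∀ i ∈ S, ω ∉ bad i := by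
  simp [avoiding]

lemma avoiding_anti {S T : Finset ι} (h : S ⊆ T) : avoiding bad T ⊆ avoiding bad S :=
  fun _ hω => mem_avoiding.2 fun i hi => mem_avoiding.1 hω i (h hi)

lemma inter_avoiding_eq_empty [DecidableEq Ω] {S : Finset ι} {i : ι} (hi : i ∈ S) :
    bad i ∩ avoiding bad S = ∅ :=
  eq_empty_of_forall_notMem fun _ hω =>
    mem_avoiding.1 (mem_inter.1 hω).2 i hi (mem_inter.1 hω).1

lemma card_avoiding_insert [DecidableEq Ω] (S : Finset ι) (i : ι) :
    (#(avoiding bad (insert i S)) : ℝ) = #(avoiding bad S) - #(bad i ∩ avoiding bad S) := by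
  have : avoiding bad (insert i S) = avoiding bad S \ bad i := by
    ext ω
    simp only [mem_avoiding, mem_sdiff, forall_mem_insert]
    tauto
  rw [this, card_sdiff, Nat.cast_sub (card_le_card inter_subset_right)]

lemma one_sub_pow_mul_card_avoiding_le [DecidableEq Ω] {x : ℝ} (hx : x ≤ 1) {A T : Finset ι}
    (hAT : Disjoint A T)
    (h : ∀ j ∈ T, ∀ R ⊆ A ∪ T, j ∉ R →
      (#(bad j ∩ avoiding bad R) : ℝ) ≤ x * #(avoiding bad R)) :
    (1 - x) ^ #T * #(avoiding bad A) ≤ #(avoiding bad (A ∪ T)) := by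
  induction T using Finset.induction_on with
  | empty => simp
  | @insert j T hjT ih =>
    have hjA : j ∉ A := disjoint_right.1 hAT (mem_insert_self j T)
    have hjAT : j ∉ A ∪ T := by simp [hjA, hjT]
    have ih := ih (disjoint_of_subset_right (subset_insert j T) hAT)
      fun l hl R hR hlR => h l (mem_insert_of_mem hl) R
        (hR.trans (union_subset_union_right (subset_insert j T))) hlR
    have hj := h j (mem_insert_self j T) (A ∪ T) (union_subset_union_right (subset_insert j T))
      hjAT
    rw [union_insert, card_avoiding_insert, card_insert_of_notMem hjT, pow_succ]
    nlinarith

variable {N : ι → Finset ι} {p : ℝ}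

theorem card_inter_avoiding_le [DecidableEq Ω] (hp : 0 ≤ p) (hN : ∀ i, i ∈ N i)
    (hindep : ∀ i (S : Finset ι), Disjoint S (N i) →
      (#(bad i ∩ avoiding bad S) : ℝ) ≤ p * #(avoiding bad S))
    (hdeg : ∀ i, Real.exp 1 * p * #(N i) ≤ 1) (S : Finset ι) (i : ι) :
    (#(bad i ∩ avoiding bad S) : ℝ) ≤ Real.exp 1 * p * #(avoiding bad S) := by
  induction S using Finset.strongInduction generalizing i with
  | _ S ih =>
  set x := Real.exp 1 * p
  have hx0 : 0 ≤ x := by positivity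
  by_cases hiS : i ∈ S
  · rw [inter_avoiding_eq_empty hiS, card_empty, Nat.cast_zero]
    positivity
  set S₁ := S.filter (· ∈ N i)
  set S₂ := S.filter (· ∉ N i)
  have hS : S₂ ∪ S₁ = S := by rw [union_comm]; exact filter_union_filter_not_eq _ S
  have hcard : x * (#S₁ + 1) ≤ 1 := by
    have : #S₁ + 1 ≤ #(N i) := by
      rw [← card_insert_of_notMem fun h => hiS (mem_filter.1 h).1]
      exact card_le_card (insert_subset (hN i) fun j hj => (mem_filter.1 hj).2)
    calc x * (#S₁ + 1) ≤ x * #(N i) := by gcongr; exact_mod_cast this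
      _ ≤ 1 := hdeg i
  have hx1 : x ≤ 1 := by nlinarith
  have hpeel : (1 - x) ^ #S₁ * #(avoiding bad S₂) ≤ #(avoiding bad S) := by
    rw [← hS]
    refine one_sub_pow_mul_card_avoiding_le hx1 (disjoint_filter_filter_not _ _ _).symm ?_
    intro j hj R hR hjR
    refine ih R (ssubset_of_subset_of_ne (hS ▸ hR) ?_) j
    rintro rfl
    exact hjR (hS ▸ mem_union_right _ hj)
  calc (#(bad i ∩ avoiding bad S) : ℝ) ≤ #(bad i ∩ avoiding bad S₂) := by
        gcongr; exact avoiding_anti (filter_subset _ S)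
    _ ≤ p * #(avoiding bad S₂) :=
        hindep i S₂ (disjoint_left.2 fun j hj => (mem_filter.1 hj).2)
    _ ≤ p * (Real.exp 1 * ((1 - x) ^ #S₁ * #(avoiding bad S₂))) := by
        gcongr
        rw [← mul_assoc]
        exact le_mul_of_one_le_left (Nat.cast_nonneg _) (one_le_exp_one_mul_one_sub_pow hcard)
    _ ≤ x * #(avoiding bad S) := by
        rw [← mul_assoc, mul_comm p]; gcongr

theorem card_avoiding_pos [Nonempty Ω] [DecidableEq Ω] (hp : 0 ≤ p) (hp1 : Real.exp 1 * p < 1)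
    (hN : ∀ i, i ∈ N i)
    (hindep : ∀ i (S : Finset ι), Disjoint S (N i) →
      (#(bad i ∩ avoiding bad S) : ℝ) ≤ p * #(avoiding bad S))
    (hdeg : ∀ i, Real.exp 1 * p * #(N i) ≤ 1) (S : Finset ι) :
    (0 : ℝ) < #(avoiding bad S) := by
  induction S using Finset.induction_on with
  | empty => simp [avoiding, Fintype.card_pos]
  | @insert i S _ ih =>
    have := card_inter_avoiding_le hp hN hindep hdeg S i
    rw [card_avoiding_insert]
    nlinarith

end LocalLemma

lemma exp_one_lt_two_pow {k : ℕ} (h : Real.exp 1 ≤ 2 ^ k) : Real.exp 1 < 2 ^ k := by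
  have h2 : (2 : ℝ) ^ 1 < 2 ^ k := by linarith [Real.exp_one_gt_d9]
  have hk : 2 ≤ k := (pow_lt_pow_iff_right₀ one_lt_two).1 h2
  calc Real.exp 1 < 2 ^ 2 := by linarith [Real.exp_one_lt_d9]
    _ ≤ 2 ^ k := pow_le_pow_right₀ one_le_two hk

section KSat

variable {V ι : Type*} (cvars : ι → Finset V) (csign : ι → V → Bool)

noncomputable def falsifying [Fintype V] [DecidableEq V] (c : ι) : Finset (V → Bool) :=
  univ.filter fun a => ∀ v ∈ cvars c, a v = !csign c v

noncomputable def sharingVar [Fintype ι] (c : ι) : Finset ι :=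
  univ.filter fun j => ¬Disjoint (cvars c) (cvars j)

variable {cvars csign}

lemma mem_sharingVar [Fintype ι] {c j : ι} :
    j ∈ sharingVar cvars c ↔ ¬Disjoint (cvars c) (cvars j) := by
  simp [sharingVar]

lemma mem_avoiding_falsifying [Fintype V] [DecidableEq V] {S : Finset ι} {a : V → Bool} :
    a ∈ avoiding (falsifying cvars csign) S ↔ ∀ j ∈ S, ∃ v ∈ cvars j, a v = csign j v := by
  simp [mem_avoiding, falsifying]

lemma self_mem_sharingVar [Fintype ι] {c : ι} (hc : (cvars c).Nonempty) :
    c ∈ sharingVar cvars c := by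
  simpa [mem_sharingVar] using hc.ne_empty

lemma card_falsifying_inter_avoiding [Fintype V] [DecidableEq V] [Fintype ι] {S : Finset ι}
    {c : ι} (hS : Disjoint S (sharingVar cvars c)) :
    (#(falsifying cvars csign c ∩ avoiding (falsifying cvars csign) S) : ℝ)
      = (2 ^ #(cvars c))⁻¹ * #(avoiding (falsifying cvars csign) S) := by
  have hG : ∀ a a', (∀ v ∉ cvars c, a v = a' v) → a ∈ avoiding (falsifying cvars csign) S →
      a' ∈ avoiding (falsifying cvars csign) S := by
    simp only [mem_avoiding_falsifying]
    intro a a' haa' ha j hj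
    obtain ⟨v, hv, hav⟩ := ha j hj
    have hvc : v ∉ cvars c := fun hvc =>
      disjoint_left.1 hS hj (mem_sharingVar.2 (not_disjoint_iff.2 ⟨v, hvc, hv⟩))
    exact ⟨v, hv, haa' v hvc ▸ hav⟩
  rw [card_eq_card_pow_mul_card_filter (cvars c) (fun v => !csign c v) hG, Fintype.card_bool,
    Nat.cast_mul, Nat.cast_pow, Nat.cast_ofNat, inv_mul_cancel_left₀ (by positivity), inter_comm]
  congr 2
  ext a
  simp [falsifying]

lemma exp_one_mul_card_sharingVar_le [DecidableEq V] [Fintype ι] {k : ℕ} (hk : 1 ≤ k)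
    (hcard : ∀ c, #(cvars c) = k)
    (hocc : ∀ v : V, (#(univ.filter fun c => v ∈ cvars c) : ℝ) ≤ 2 ^ k / (Real.exp 1 * k))
    (c : ι) : Real.exp 1 * #(sharingVar cvars c) ≤ 2 ^ k := by
  have hsub :
      sharingVar cvars c ⊆ (cvars c).biUnion fun v => univ.filter fun j => v ∈ cvars j := by
    intro j hj
    obtain ⟨v, hvc, hvj⟩ := not_disjoint_iff.1 (mem_sharingVar.1 hj)
    exact mem_biUnion.2 ⟨v, hvc, mem_filter.2 ⟨mem_univ j, hvj⟩⟩
  have hk0 : (0 : ℝ) < k := by exact_mod_cast hk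
  calc Real.exp 1 * #(sharingVar cvars c)
      ≤ Real.exp 1 * ∑ v ∈ cvars c, (#(univ.filter fun j => v ∈ cvars j) : ℝ) := by
        gcongr
        exact_mod_cast (card_le_card hsub).trans card_biUnion_le
    _ ≤ Real.exp 1 * ∑ _v ∈ cvars c, 2 ^ k / (Real.exp 1 * k) := by
        gcongr with v
        exact hocc v
    _ = 2 ^ k := by
        rw [sum_const, hcard, nsmul_eq_mul]
        field_simp

end KSat

/-- A k-SAT instance: clauses indexed by a finite type `ι`, each clause `c`
consisting of a set `cvars c` of exactly `k` distinct variables, each occurring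
with sign `csign c v` (the literal is `v` if `csign c v = true`, `¬v` otherwise).
An assignment `a` satisfies clause `c` iff some variable in it gets its sign. -/
theorem ksat_satisfiable {V : Type*} [Fintype V] [DecidableEq V]
    {ι : Type*} [Fintype ι]
    (k : ℕ) (hk : 1 ≤ k)
    (cvars : ι → Finset V) (csign : ι → V → Bool)
    (hcard : ∀ c, (cvars c).card = k)
    (hocc : ∀ v : V,
      (((Finset.univ : Finset ι).filter (fun c => v ∈ cvars c)).card : ℝ)
        ≤ 2 ^ k / (Real.exp 1 * k)) :
    ∃ a : V → Bool, ∀ c : ι, ∃ v ∈ cvars c, a v = csign c v := by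
  rcases isEmpty_or_nonempty ι with hι | ⟨⟨c₀⟩⟩
  · exact ⟨fun _ => true, fun c => isEmptyElim c⟩
  have hvars : ∀ c, (cvars c).Nonempty := fun c => card_pos.1 (by rw [hcard c]; omega)
  have hdeg := exp_one_mul_card_sharingVar_le hk hcard hocc
  have hp1 : Real.exp 1 < 2 ^ k := exp_one_lt_two_pow <| by
    have : (1 : ℝ) ≤ #(sharingVar cvars c₀) :=
      Nat.one_le_cast.2 (card_pos.2 ⟨c₀, self_mem_sharingVar (hvars c₀)⟩)
    exact (le_mul_of_one_le_right (Real.exp_pos 1).le this).trans (hdeg c₀)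
  have hpos := card_avoiding_pos (bad := falsifying cvars csign) (p := (2 ^ k)⁻¹)
    (by positivity) (by rw [← div_eq_mul_inv, div_lt_one (by positivity)]; exact hp1)
    (fun c => self_mem_sharingVar (hvars c))
    (fun c S hS => (card_falsifying_inter_avoiding hS).le.trans_eq (by rw [hcard]))
    (fun c => by rw [mul_right_comm, ← div_eq_mul_inv, div_le_one (by positivity)]; exact hdeg c)
    univ
  obtain ⟨a, ha⟩ := card_pos.1 (Nat.cast_pos.1 hpos)
  exact ⟨a, fun c => mem_avoiding_falsifying.1 ha c (mem_univ c)⟩
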